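/- arXiv:2408.13231 — 4 statements merged into one kernel-verified Lean document; each statement's English description precedes it below -/
import Mathlib

section
/- Let d ≥ 2, x,y ∈ ℝ^d, σ > 0. Define f̄(ξ) := ∫_{S^{d-1}} cos(⟨(√(2ξ)/σ) n, x-y⟩) dπ(n), where π is the uniform probability measure on the unit sphere. Then f̄(ξ) = ∑_{n=0}^∞ β_n ξ^n with β_n = (-‖x-y‖²/(2σ²))^n Γ(d/2)/(Γ(n+1)Γ(d/2+n)). -/
open Real MeasureTheory

/-- The uniform probability measure on the unit sphere of `ℝ^d`. -/
noncomputable def uniformSphereMeasure (d : ℕ) :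
    Measure (Metric.sphere (0 : EuclideanSpace ℝ (Fin d)) 1) :=
  ((volume : Measure (EuclideanSpace ℝ (Fin d))).toSphere Set.univ)⁻¹ •
    (volume : Measure (EuclideanSpace ℝ (Fin d))).toSphere

/-!
Expanding `cos` in its Taylor series and integrating termwise (the terms are uniformly bounded on
the sphere), everything reduces to the even moments of a linear form under the uniform measure,
`⨍ ⟪n, e⟫ ^ (2k) = Γ(k + 1/2) Γ(d/2) / (√π Γ(k + d/2))` for a unit vector `e`. These come from
computing the Gaussian moment `∫ ⟪x, e⟫ ^ (2k) exp (-‖x‖²) dx` in two ways: in an orthonormal basis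
containing `e` it factors into one-dimensional Gamma integrals, and in polar coordinates it is the
sphere moment times a radial Gamma integral; `k = 0` gives the area of the sphere. Finally
`Γ(k + 1/2) = (2k)! √π / (4^k k!)` turns `(-1)^k / (2k)!` times the moment into `β_k`.
-/

open Set Metric Module
open scoped Nat RealInnerProductSpace

theorem Real.Gamma_nat_add_half_eq_factorial (k : ℕ) :
    Gamma (k + 1 / 2) = (2 * k)! * √π / (4 ^ k * k !) := by
  rw [Gamma_nat_add_half]
  have h4 : (4 : ℝ) ^ k = 2 ^ k * 2 ^ k := by rw [← mul_pow]; norm_num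
  cases k with
  | zero => simp
  | succ k =>
    have h : (2 * (k + 1))! = 2 ^ (k + 1) * (k + 1)! * (2 * (k + 1) - 1)‼ := by
      rw [show 2 * (k + 1) = 2 * k + 1 + 1 by ring, Nat.factorial_eq_mul_doubleFactorial,
        show 2 * k + 1 + 1 = 2 * (k + 1) by ring, Nat.doubleFactorial_two_mul]
      rfl
    rw [h, h4]
    push_cast
    field_simp

theorem integral_Ioi_pow_mul_exp_neg_sq (m : ℕ) :
    ∫ r in Ioi (0 : ℝ), r ^ m * exp (-r ^ 2) = Gamma ((m + 1) / 2) / 2 := by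
  have h := integral_rpow_mul_exp_neg_rpow (p := 2) (q := m) two_pos
    (neg_one_lt_zero.trans_le m.cast_nonneg)
  simp only [rpow_natCast, rpow_ofNat] at h
  rw [h]; ring

theorem integral_pow_two_mul_mul_exp_neg_sq (k : ℕ) :
    ∫ x : ℝ, x ^ (2 * k) * exp (-x ^ 2) = Gamma (k + 1 / 2) := by
  calc ∫ x : ℝ, x ^ (2 * k) * exp (-x ^ 2) = ∫ x : ℝ, |x| ^ (2 * k) * exp (-|x| ^ 2) := by
        simp only [pow_mul, sq_abs]
    _ = Gamma (k + 1 / 2) := by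
        rw [integral_comp_abs (f := fun x ↦ x ^ (2 * k) * exp (-x ^ 2)),
          integral_Ioi_pow_mul_exp_neg_sq]
        push_cast
        ring_nf

theorem EuclideanSpace.integral_pow_mul_exp_neg_norm_sq {ι : Type*} [Fintype ι] (i : ι)
    (k : ℕ) :
    ∫ y : EuclideanSpace ℝ ι, y i ^ (2 * k) * exp (-‖y‖ ^ 2) =
      Gamma (k + 1 / 2) * √π ^ (Fintype.card ι - 1) := by
  classical
  let f (j : ι) (t : ℝ) : ℝ := t ^ (2 * if j = i then k else 0) * exp (-t ^ 2)
  have hprod (z : ι → ℝ) :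
      (WithLp.toLp 2 z) i ^ (2 * k) * exp (-‖WithLp.toLp 2 z‖ ^ 2) = ∏ j, f j (z j) := by
    simp only [f, EuclideanSpace.real_norm_sq_eq, ← Finset.sum_neg_distrib, exp_sum,
      Finset.prod_mul_distrib, mul_ite, mul_zero, pow_ite, pow_zero, Finset.prod_ite_eq',
      Finset.mem_univ, if_true]
  have hf (j : ι) : ∫ t, f j t = Gamma ((if j = i then k else 0 : ℕ) + 1 / 2) := by
    simp only [f, ← integral_pow_two_mul_mul_exp_neg_sq]
  rw [← ((EuclideanSpace.volume_preserving_symm_measurableEquiv_toLp ι).symm).integral_comp']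
  simp only [MeasurableEquiv.symm_symm, MeasurableEquiv.coe_toLp, hprod]
  rw [volume_pi, integral_fintype_prod_eq_prod, Fintype.prod_eq_mul_prod_compl i,
    Finset.prod_congr rfl fun j hj ↦ by
      rw [hf, if_neg (Finset.notMem_singleton.1 (Finset.mem_compl.1 hj))]]
  simp only [hf, if_true, Nat.cast_zero, zero_add, Gamma_one_half_eq, Finset.prod_const,
    Finset.card_compl, Finset.card_singleton]

section Polar

variable {E : Type*} [NormedAddCommGroup E] [NormedSpace ℝ E] [FiniteDimensional ℝ E]
  [MeasurableSpace E] [BorelSpace E] [Nontrivial E] (μ : Measure E) [μ.IsAddHaarMeasure]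

theorem MeasureTheory.Measure.integral_volumeIoiPow (n : ℕ) (h : ℝ → ℝ) :
    ∫ r : Ioi (0 : ℝ), h r ∂Measure.volumeIoiPow n = ∫ r in Ioi 0, r ^ n * h r := by
  rw [Measure.volumeIoiPow, integral_withDensity_eq_integral_toReal_smul
      (by fun_prop) (.of_forall fun _ ↦ ENNReal.ofReal_lt_top),
    integral_subtype_comap measurableSet_Ioi fun r ↦ (ENNReal.ofReal (r ^ n)).toReal • h r]
  refine setIntegral_congr_fun measurableSet_Ioi fun r (hr : 0 < r) ↦ ?_
  rw [ENNReal.toReal_ofReal (by positivity), smul_eq_mul]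

theorem MeasureTheory.integral_polar_addHaar (g : E → ℝ) (h : ℝ → ℝ) :
    ∫ x, g (‖x‖⁻¹ • x) * h ‖x‖ ∂μ =
      (∫ n : sphere (0 : E) 1, g n ∂μ.toSphere) *
        ∫ r in Ioi 0, r ^ (finrank ℝ E - 1) * h r := by
  calc ∫ x, g (‖x‖⁻¹ • x) * h ‖x‖ ∂μ
        = ∫ x : ({0}ᶜ : Set E), g (‖(x : E)‖⁻¹ • x) * h ‖(x : E)‖ ∂μ.comap (↑) := by
          rw [integral_subtype_comap (measurableSet_singleton _).compl
            fun x ↦ g (‖x‖⁻¹ • x) * h ‖x‖, restrict_compl_singleton]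
    _ = ∫ p : sphere (0 : E) 1 × Ioi (0 : ℝ), g p.1 * h p.2
          ∂μ.toSphere.prod (.volumeIoiPow (finrank ℝ E - 1)) := by
          simpa using μ.measurePreserving_homeomorphUnitSphereProd.integral_comp
            (Homeomorph.measurableEmbedding _) fun p ↦ g p.1 * h p.2
    _ = _ := by
          rw [integral_prod_mul (fun n : sphere (0 : E) 1 ↦ g n) (fun r : Ioi (0 : ℝ) ↦ h r),
            Measure.integral_volumeIoiPow]

end Polar

section InnerProductSpace

variable {E : Type*} [NormedAddCommGroup E] [InnerProductSpace ℝ E] [FiniteDimensional ℝ E]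
  [MeasurableSpace E] [BorelSpace E]

theorem integral_inner_pow_mul_exp_neg_norm_sq {e : E} (he : ‖e‖ = 1) (k : ℕ) :
    ∫ x : E, ⟪x, e⟫ ^ (2 * k) * exp (-‖x‖ ^ 2) =
      Gamma (k + 1 / 2) * √π ^ (finrank ℝ E - 1) := by
  have : Nontrivial E := nontrivial_of_ne e 0 (by simp [← norm_ne_zero_iff, he])
  let i : Fin (finrank ℝ E) := ⟨0, finrank_pos⟩
  have hsingle : Orthonormal ℝ (({i} : Set (Fin (finrank ℝ E))).domRestrict fun _ ↦ e) :=
    ⟨fun _ ↦ he, fun j j' hjj' ↦ (hjj' (Subsingleton.elim j j')).elim⟩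
  obtain ⟨b, hb⟩ := hsingle.exists_orthonormalBasis_extension_of_card_eq (by simp)
  have hcoord (x : E) : ⟪x, e⟫ = b.repr x i := by
    rw [b.repr_apply_apply, hb i rfl, real_inner_comm]
  simp_rw [hcoord, ← b.repr.norm_map]
  have := EuclideanSpace.integral_pow_mul_exp_neg_norm_sq i k
  rw [Fintype.card_fin] at this
  exact (b.measurePreserving_measurableEquiv.integral_comp' _).trans this

theorem integral_inner_pow_toSphere_mul {e : E} (he : ‖e‖ = 1) (k : ℕ) :
    (∫ n : sphere (0 : E) 1, ⟪(n : E), e⟫ ^ (2 * k) ∂(volume : Measure E).toSphere) *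
      (Gamma (k + finrank ℝ E / 2) / 2) = Gamma (k + 1 / 2) * √π ^ (finrank ℝ E - 1) := by
  have : Nontrivial E := nontrivial_of_ne e 0 (by simp [← norm_ne_zero_iff, he])
  have hhom (x : E) : ⟪x, e⟫ ^ (2 * k) * exp (-‖x‖ ^ 2) =
      ⟪‖x‖⁻¹ • x, e⟫ ^ (2 * k) * (‖x‖ ^ (2 * k) * exp (-‖x‖ ^ 2)) := by
    rcases eq_or_ne x 0 with rfl | hx
    · simp only [norm_zero, inv_zero, smul_zero, inner_zero_left, ← mul_assoc, ← mul_pow,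
        mul_zero]
    · rw [real_inner_smul_left, ← mul_assoc, ← mul_pow, mul_right_comm,
        inv_mul_cancel₀ (norm_ne_zero_iff.2 hx), one_mul]
  have hrad : ∫ r in Ioi 0, r ^ (finrank ℝ E - 1) * (r ^ (2 * k) * exp (-r ^ 2)) =
      Gamma (k + finrank ℝ E / 2) / 2 := by
    simp_rw [← mul_assoc, ← pow_add]
    rw [integral_Ioi_pow_mul_exp_neg_sq]
    congr 2
    push_cast [Nat.cast_sub (finrank_pos (R := ℝ) (M := E))]
    ring
  rw [← hrad, ← integral_polar_addHaar volume (fun x ↦ ⟪x, e⟫ ^ (2 * k))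
    (fun r ↦ r ^ (2 * k) * exp (-r ^ 2)), ← integral_inner_pow_mul_exp_neg_norm_sq he]
  simp_rw [hhom]

theorem average_inner_pow_toSphere {e : E} (he : ‖e‖ = 1) (k : ℕ) :
    ⨍ n : sphere (0 : E) 1, ⟪(n : E), e⟫ ^ (2 * k) ∂(volume : Measure E).toSphere =
      Gamma (k + 1 / 2) * Gamma (finrank ℝ E / 2) / (√π * Gamma (k + finrank ℝ E / 2)) := by
  have : Nontrivial E := nontrivial_of_ne e 0 (by simp [← norm_ne_zero_iff, he])
  have hn : (0 : ℝ) < finrank ℝ E := mod_cast finrank_pos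
  have hmass := integral_inner_pow_toSphere_mul he 0
  simp only [mul_zero, pow_zero, integral_const, smul_eq_mul, mul_one, Nat.cast_zero, zero_add,
    Gamma_one_half_eq] at hmass
  have hmom := integral_inner_pow_toSphere_mul he k
  have hΓ : 0 < Gamma (finrank ℝ E / 2) := Gamma_pos_of_pos (by positivity)
  have hΓk : 0 < Gamma (k + finrank ℝ E / 2) := Gamma_pos_of_pos (by positivity)
  have hπ : 0 < √π := sqrt_pos.2 pi_pos
  rw [average_eq, smul_eq_mul, eq_div_of_mul_eq (by positivity) hmass,
    eq_div_of_mul_eq (by positivity) hmom]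
  field_simp

end InnerProductSpace

theorem integral_cos_eq_tsum {X : Type*} [MeasurableSpace X] (μ : Measure X) [IsFiniteMeasure μ]
    {g : X → ℝ} (hg : AEStronglyMeasurable g μ) {C : ℝ} (hC : ∀ x, |g x| ≤ C) :
    ∫ x, cos (g x) ∂μ = ∑' k : ℕ, (-1) ^ k / (2 * k)! * ∫ x, g x ^ (2 * k) ∂μ := by
  set F : ℕ → X → ℝ := fun k x ↦ (-1) ^ k * g x ^ (2 * k) / (2 * k)!
  have hF_le (k : ℕ) (x : X) : ‖F k x‖ ≤ C ^ (2 * k) / (2 * k)! := by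
    simp only [F, norm_div, norm_mul, norm_pow, norm_neg, norm_one, one_pow, one_mul,
      Real.norm_eq_abs, Nat.abs_cast]
    gcongr
    exact hC x
  have hF_int (k : ℕ) : Integrable (F k) μ :=
    .of_bound (by fun_prop) _ (.of_forall (hF_le k))
  have hF_sum : Summable fun k ↦ ∫ x, ‖F k x‖ ∂μ := by
    refine .of_nonneg_of_le (fun k ↦ integral_nonneg fun x ↦ norm_nonneg _)
      (fun k ↦ ?_) (((summable_pow_div_factorial C).comp_injective
        (mul_right_injective₀ two_ne_zero)).mul_left (μ.real univ))
    calc ∫ x, ‖F k x‖ ∂μ ≤ ∫ _, C ^ (2 * k) / (2 * k)! ∂μ :=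
          integral_mono (hF_int k).norm (integrable_const _) (hF_le k)
      _ = _ := by simp
  simp_rw [cos_eq_tsum]
  rw [← integral_tsum_of_summable_integral_norm hF_int hF_sum]
  congr 1 with k
  rw [← integral_const_mul]
  congr 1 with x
  ring

instance (d : ℕ) : IsFiniteMeasure (uniformSphereMeasure d) :=
  IsFiniteMeasure.average

theorem integral_inner_pow_uniformSphereMeasure {d : ℕ} (hd : 0 < d)
    (u : EuclideanSpace ℝ (Fin d)) (k : ℕ) :
    ∫ n, ⟪(n : EuclideanSpace ℝ (Fin d)), u⟫ ^ (2 * k) ∂uniformSphereMeasure d =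
      ‖u‖ ^ (2 * k) * (Gamma (k + 1 / 2) * Gamma (d / 2) / (√π * Gamma (k + d / 2))) := by
  have : NeZero d := ⟨hd.ne'⟩
  obtain ⟨e, he, hue⟩ : ∃ e : EuclideanSpace ℝ (Fin d), ‖e‖ = 1 ∧ ‖u‖ • e = u := by
    rcases eq_or_ne u 0 with rfl | hu
    · obtain ⟨e, he⟩ := exists_norm_eq (EuclideanSpace ℝ (Fin d)) zero_le_one
      exact ⟨e, he, by simp⟩
    · exact ⟨‖u‖⁻¹ • u, norm_smul_inv_norm hu, smul_inv_smul₀ (norm_ne_zero_iff.2 hu) u⟩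
  have hpow (n : EuclideanSpace ℝ (Fin d)) :
      ⟪n, u⟫ ^ (2 * k) = ‖u‖ ^ (2 * k) * ⟪n, e⟫ ^ (2 * k) := by
    conv_lhs => rw [← hue]
    rw [real_inner_smul_right, mul_pow]
  simp_rw [hpow]
  rw [integral_const_mul, uniformSphereMeasure, ← average_eq', average_inner_pow_toSphere he,
    finrank_euclideanSpace_fin]

theorem spherical_average_eq_tsum_general (d : ℕ) (hd : 2 ≤ d)
    (x y : EuclideanSpace ℝ (Fin d)) (σ : ℝ) (ξ : ℝ) (hξ : 0 ≤ ξ) :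
    (∫ n : Metric.sphere (0 : EuclideanSpace ℝ (Fin d)) 1,
        Real.cos (inner ℝ ((Real.sqrt (2 * ξ) / σ) • (n : EuclideanSpace ℝ (Fin d))) (x - y) : ℝ)
        ∂(uniformSphereMeasure d)) =
      ∑' n : ℕ, (-(‖x - y‖ ^ 2 / (2 * σ ^ 2))) ^ n * Real.Gamma ((d : ℝ) / 2) /
        (Real.Gamma ((n : ℝ) + 1) * Real.Gamma ((d : ℝ) / 2 + (n : ℝ))) * ξ ^ n := by
  set v := (√(2 * ξ) / σ) • (x - y)
  have hinner (n : EuclideanSpace ℝ (Fin d)) : ⟪(√(2 * ξ) / σ) • n, x - y⟫ = ⟪n, v⟫ := by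
    rw [real_inner_smul_left, real_inner_smul_right]
  have hbound (n : sphere (0 : EuclideanSpace ℝ (Fin d)) 1) :
      |⟪(n : EuclideanSpace ℝ (Fin d)), v⟫| ≤ ‖v‖ := by
    simpa using abs_real_inner_le_norm (n : EuclideanSpace ℝ (Fin d)) v
  have hv : ‖v‖ ^ 2 = 2 * ξ / σ ^ 2 * ‖x - y‖ ^ 2 := by
    rw [norm_smul, mul_pow, Real.norm_eq_abs, sq_abs, div_pow, sq_sqrt (by positivity)]
  simp_rw [hinner]
  rw [integral_cos_eq_tsum _ (by fun_prop) hbound]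
  congr 1 with k
  rw [integral_inner_pow_uniformSphereMeasure (by omega), pow_mul, hv,
    Gamma_nat_add_half_eq_factorial, Gamma_nat_eq_factorial, add_comm ((d : ℝ) / 2),
    show 2 * ξ / σ ^ 2 * ‖x - y‖ ^ 2 = 4 * (‖x - y‖ ^ 2 / (2 * σ ^ 2) * ξ) by ring, mul_pow,
    neg_pow (‖x - y‖ ^ 2 / (2 * σ ^ 2)), mul_pow]
  field_simp

/-- The spherical average `f̄(ξ) = ∫_{S^{d-1}} cos⟨(√(2ξ)/σ) n, x-y⟩ dπ(n)` has the
power series expansion `∑ β_n ξ^n` with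
`β_n = (-‖x-y‖²/(2σ²))^n Γ(d/2)/(Γ(n+1)Γ(d/2+n))`, for every `ξ ≥ 0`. -/
theorem spherical_average_eq_tsum (d : ℕ) (hd : 2 ≤ d)
    (x y : EuclideanSpace ℝ (Fin d)) (σ : ℝ) (hσ : 0 < σ) (ξ : ℝ) (hξ : 0 ≤ ξ) :
    (∫ n : Metric.sphere (0 : EuclideanSpace ℝ (Fin d)) 1,
        Real.cos (inner ℝ ((Real.sqrt (2 * ξ) / σ) • (n : EuclideanSpace ℝ (Fin d))) (x - y) : ℝ)
        ∂(uniformSphereMeasure d)) =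
      ∑' n : ℕ, (-(‖x - y‖ ^ 2 / (2 * σ ^ 2))) ^ n * Real.Gamma ((d : ℝ) / 2) /
        (Real.Gamma ((n : ℝ) + 1) * Real.Gamma ((d : ℝ) / 2 + (n : ℝ))) * ξ ^ n :=
  spherical_average_eq_tsum_general d hd x y σ ξ hξ
end

section
/- For α, α' natural numbers (with α' ≥ 1) and n a natural number, ∫_0^∞ x^{α'-1} e^{-x} L_n^α(x) dx = C(α - α' + n, n) · Γ(α'), where L_n^α is the generalized Laguerre polynomial and C(m-n-1, m) := (m-n-1)(m-n-2)⋯(-n)/m! denotes the generalized binomial coefficient; in particular, C(α-α'+n, n) = 0, so the integral vanishes, when 0 ≤ α'−α−1 ≤ n−1. -/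
open Real MeasureTheory

/-- The generalized Laguerre polynomial `L_n^α(x) = ∑_{i=0}^n (1/i!) C(n+α, n-i) (-x)^i`
for natural parameter `α`. -/
noncomputable def genLaguerre (n α : ℕ) (x : ℝ) : ℝ :=
  ∑ i ∈ Finset.range (n + 1),
    ((-x) ^ i / (Nat.factorial i)) * (Nat.choose (n + α) (n - i))

/-- The generalized binomial coefficient `C(t, n) = t(t-1)⋯(t-n+1)/n!` for real `t`. -/
noncomputable def genBinom (t : ℝ) (n : ℕ) : ℝ :=
  (∏ j ∈ Finset.range n, (t - (j : ℝ))) / (Nat.factorial n)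

lemma descPochhammer_eval_eq_prod (n : ℕ) (t : ℝ) :
    (descPochhammer ℝ n).eval t = ∏ j ∈ Finset.range n, (t - (j : ℝ)) := by
  induction n with
  | zero => simp
  | succ k ih => rw [descPochhammer_succ_eval, ih, Finset.prod_range_succ]

lemma genBinom_eq_choose (t : ℝ) (n : ℕ) : genBinom t n = Ring.choose t n := by
  have h1 : (descPochhammer ℤ n).smeval t = (descPochhammer ℝ n).eval t := by
    rw [← Polynomial.aeval_eq_smeval, Polynomial.aeval_def, ← Polynomial.eval_map,
      descPochhammer_map]
  have h2 := Ring.descPochhammer_eq_factorial_smul_choose t n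
  rw [h1, descPochhammer_eval_eq_prod] at h2
  rw [genBinom, h2, nsmul_eq_mul]
  field_simp

lemma genBinom_add (s t : ℝ) (n : ℕ) :
    genBinom (s + t) n = ∑ ij ∈ Finset.HasAntidiagonal.antidiagonal n, genBinom s ij.1 * genBinom t ij.2 := by
  simp only [genBinom_eq_choose]
  exact Ring.add_choose_eq n (Commute.all s t)

lemma genBinom_natCast (m k : ℕ) : genBinom (m : ℝ) k = Nat.choose m k := by
  rw [genBinom_eq_choose, Ring.choose_natCast]

lemma prod_add_mul_factorial (a : ℕ) (ha : 1 ≤ a) (i : ℕ) :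
    (∏ j ∈ Finset.range i, ((a : ℝ) + (j : ℝ))) * (Nat.factorial (a - 1)) =
      (Nat.factorial (a - 1 + i)) := by
  induction i with
  | zero => simp
  | succ k ih =>
    rw [Finset.prod_range_succ, mul_right_comm, ih]
    have hak : a - 1 + (k + 1) = (a - 1 + k) + 1 := by omega
    rw [hak, Nat.factorial_succ]
    have : (a : ℝ) + (k : ℝ) = ((a - 1 + k + 1 : ℕ) : ℝ) := by
      push_cast [Nat.sub_add_cancel ha]
      have : ((a - 1 : ℕ) : ℝ) = (a : ℝ) - 1 := by
        push_cast [Nat.cast_sub ha]; ring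
      rw [this]; ring
    rw [this]
    push_cast
    ring

lemma genBinom_neg_natCast (a : ℕ) (ha : 1 ≤ a) (i : ℕ) :
    genBinom (-(a : ℝ)) i * (Nat.factorial (a - 1)) =
      (-1) ^ i * (Nat.factorial (a - 1 + i)) / (Nat.factorial i) := by
  have hp : (∏ j ∈ Finset.range i, (-(a : ℝ) - (j : ℝ))) =
      (-1) ^ i * ∏ j ∈ Finset.range i, ((a : ℝ) + (j : ℝ)) := by
    rw [Finset.prod_congr rfl (fun j (_ : j ∈ Finset.range i) =>
      (by ring : -(a : ℝ) - (j : ℝ) = (-1) * ((a : ℝ) + (j : ℝ)))), Finset.prod_mul_distrib,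
      Finset.prod_const, Finset.card_range]
  rw [genBinom, hp]
  rw [div_mul_eq_mul_div, mul_assoc, prod_add_mul_factorial a ha i]

lemma integral_exp_neg_mul_pow (k : ℕ) :
    ∫ x in Set.Ioi (0 : ℝ), Real.exp (-x) * x ^ k = (Nat.factorial k : ℝ) := by
  have h := Real.Gamma_eq_integral (s := (k : ℝ) + 1) (by positivity)
  rw [Real.Gamma_nat_eq_factorial] at h
  rw [h]
  apply setIntegral_congr_fun (by measurability)
  intro x _
  simp only [add_sub_cancel_right]
  rw [Real.rpow_natCast]

lemma integrable_exp_neg_mul_pow (k : ℕ) :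
    IntegrableOn (fun x => Real.exp (-x) * x ^ k) (Set.Ioi (0 : ℝ)) := by
  have h := Real.GammaIntegral_convergent (s := (k : ℝ) + 1) (by positivity)
  have heq : (fun x : ℝ => Real.exp (-x) * x ^ ((k : ℝ) + 1 - 1)) =
      fun x : ℝ => Real.exp (-x) * x ^ k := by
    funext x
    simp only [add_sub_cancel_right]
    rw [Real.rpow_natCast]
  rwa [heq] at h

/-- Moment integral of the generalized Laguerre polynomial:
`∫ x^(α'-1) e^(-x) L_n^α(x) dx = C(α-α'+n, n) Γ(α')` for naturals `α, α'` with `α' ≥ 1`. -/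
theorem integral_rpow_exp_genLaguerre (n α α' : ℕ) (hα' : 1 ≤ α') :
    ∫ x in Set.Ioi (0 : ℝ), x ^ (α' - 1) * Real.exp (-x) * genLaguerre n α x =
      genBinom ((α : ℝ) - (α' : ℝ) + (n : ℝ)) n * Real.Gamma (α' : ℝ) := by
  set m := α' - 1 with hm
  -- the coefficient of each term
  set c : ℕ → ℝ := fun i => (-1) ^ i / (Nat.factorial i) * (Nat.choose (n + α) (n - i)) with hc
  -- rewrite the integrand as a finite sum
  have hintegrand : ∀ x ∈ Set.Ioi (0 : ℝ),
      x ^ (α' - 1) * Real.exp (-x) * genLaguerre n α x =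
        ∑ i ∈ Finset.range (n + 1), c i * (Real.exp (-x) * x ^ (m + i)) := by
    intro x _
    rw [genLaguerre, Finset.mul_sum]
    apply Finset.sum_congr rfl
    intro i _
    rw [hc, pow_add, neg_pow]
    ring
  rw [setIntegral_congr_fun (by measurability) hintegrand]
  rw [MeasureTheory.integral_finset_sum _ (fun i _ => by
    exact ((integrable_exp_neg_mul_pow (m + i)).const_mul (c i)))]
  have hterm : ∀ i ∈ Finset.range (n + 1),
      ∫ x in Set.Ioi (0 : ℝ), c i * (Real.exp (-x) * x ^ (m + i)) =
        c i * (Nat.factorial (m + i)) := by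
    intro i _
    rw [MeasureTheory.integral_const_mul, integral_exp_neg_mul_pow]
  rw [Finset.sum_congr rfl hterm]
  -- now the combinatorial identity
  have hGamma : Real.Gamma (α' : ℝ) = (Nat.factorial m : ℝ) := by
    have : (α' : ℝ) = (m : ℝ) + 1 := by
      rw [hm]; push_cast [Nat.cast_sub hα']; ring
    rw [this, Real.Gamma_nat_eq_factorial]
  rw [hGamma]
  have hsplit : (α : ℝ) - (α' : ℝ) + (n : ℝ) = (-(α' : ℝ)) + ((n + α : ℕ) : ℝ) := by
    push_cast; ring
  rw [hsplit, genBinom_add, Finset.Nat.sum_antidiagonal_eq_sum_range_succ_mk, Finset.sum_mul]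
  apply Finset.sum_congr rfl
  intro i _
  rw [genBinom_natCast]
  show c i * ((m + i).factorial : ℝ) =
    genBinom (-(α' : ℝ)) i * (((n + α).choose (n - i) : ℕ) : ℝ) * (m.factorial : ℝ)
  have hgb := genBinom_neg_natCast α' hα' i
  have hi : (Nat.factorial i : ℝ) ≠ 0 := by positivity
  simp only [hc, hm] at *
  field_simp at hgb ⊢
  linear_combination (-(((n + α).choose (n - i) : ℕ) : ℝ)) * hgb
end

section
/- Let d ≥ 2, x, y ∈ ℝ^d, σ > 0, and c := ‖x-y‖/(√2 σ). Define the coefficients γ_m := ⟨f̄, ℓ_m^α⟩ in the orthonormal basis of normalized generalized Laguerre polynomials ℓ_m^α with α = d/2 - 1, where f̄(ξ) = ∑_{n=0}^∞ (-c²)^n Γ(d/2) ξ^n /(Γ(n+1)Γ(d/2+n)) and the inner product is with respect to p(ξ) = ξ^{d/2-1} e^{-ξ}/Γ(d/2) on [0,∞). Then |γ_m| ≤ √(1/(m! Γ(m+d/2))) c^{2m} e^{-c²}; in fact γ_m = (-1)^m √(1/(m! Γ(m+d/2))) c^{2m} e^{-c²} up to sign, so |γ_m| equals the stated bound. -/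
open Real MeasureTheory

/-- The generalized Laguerre polynomial `L_m^α` for real parameter `α`. -/
noncomputable def genLaguerreR (m : ℕ) (α : ℝ) (x : ℝ) : ℝ :=
  ∑ i ∈ Finset.range (m + 1),
    ((-x) ^ i / (Nat.factorial i)) *
      ((∏ j ∈ Finset.range (m - i), ((m : ℝ) + α - (j : ℝ))) / (Nat.factorial (m - i)))

/-- The normalized generalized Laguerre polynomial `ℓ_m^α = √(m!/Γ(m+α+1)) L_m^α`. -/
noncomputable def normGenLaguerre (m : ℕ) (α : ℝ) (x : ℝ) : ℝ :=
  Real.sqrt ((Nat.factorial m) / Real.Gamma ((m : ℝ) + α + 1)) * genLaguerreR m α x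

/-!
Writing `L_m^α` in monomials, each moment `∫ ξ^n L_m^α(ξ) ξ^α e^{-ξ} dξ` becomes a Chu–Vandermonde
sum of Pochhammer symbols and equals `(-1)^m Γ(n+α+1) C(n,m)`. Since `|L_m^α(ξ)| ≤ C e^{ξ/2}`, the
power series of `f̄` may be integrated termwise against `L_m^α`; the `Γ`-factors then cancel those
in the coefficients of `f̄`, leaving `(-1)^m ∑ₙ C(n,m) (-c²)^n / n! = (c²)^m e^{-c²} / m!`.
-/

open Finset Polynomial
open scoped Nat

theorem descPochhammer_eval_add {R : Type*} [CommRing R] (r s : R) (k : ℕ) :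
    (descPochhammer R k).eval (r + s) = ∑ i ∈ range (k + 1),
      k.choose i * ((descPochhammer R i).eval r * (descPochhammer R (k - i)).eval s) := by
  have h_eval : ∀ (j : ℕ) (t : R), (descPochhammer R j).eval t = (descPochhammer ℤ j).smeval t :=
    fun j t => by rw [← descPochhammer_map (algebraMap ℤ R), eval_map, ← aeval_def,
      aeval_eq_smeval]
  simp only [h_eval]
  rw [Ring.descPochhammer_smeval_add k (Commute.all r s), Nat.sum_antidiagonal_eq_sum_range_succ
    (fun i j => (k.choose i : R) * ((descPochhammer ℤ i).smeval r * (descPochhammer ℤ j).smeval s))]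

theorem Gamma_add_nat_eq_mul_ascPochhammer {x : ℝ} (hx : 0 < x) (n : ℕ) :
    Gamma (x + n) = Gamma x * (ascPochhammer ℝ n).eval x := by
  induction n with
  | zero => simp
  | succ n ih =>
    rw [Nat.cast_succ, ← add_assoc, Gamma_add_one (by positivity), ih, ascPochhammer_succ_eval]
    ring

noncomputable def laguerreCoeff (m : ℕ) (α : ℝ) (i : ℕ) : ℝ :=
  (-1) ^ i * (descPochhammer ℝ (m - i)).eval (m + α) / (i ! * (m - i)!)

theorem genLaguerreR_eq_sum (m : ℕ) (α x : ℝ) :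
    genLaguerreR m α x = ∑ i ∈ range (m + 1), laguerreCoeff m α i * x ^ i := by
  refine sum_congr rfl fun i _ => ?_
  rw [laguerreCoeff, descPochhammer_eval_eq_prod_range, neg_pow]
  field_simp

theorem sum_laguerreCoeff_mul_ascPochhammer (m n : ℕ) (α : ℝ) :
    ∑ i ∈ range (m + 1), laguerreCoeff m α i * (ascPochhammer ℝ i).eval (n + α + 1) =
      (-1) ^ m * n.choose m := by
  have h_term : ∀ i ∈ range (m + 1),
      laguerreCoeff m α i * (ascPochhammer ℝ i).eval (n + α + 1) =
        (m ! : ℝ)⁻¹ * (m.choose i * ((descPochhammer ℝ i).eval (-(n + α + 1)) *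
          (descPochhammer ℝ (m - i)).eval (m + α))) := by
    intro i hi
    have him : i ≤ m := Nat.lt_succ_iff.mp (mem_range.mp hi)
    rw [← neg_neg ((n : ℝ) + α + 1), ascPochhammer_eval_neg_eq_descPochhammer, laguerreCoeff,
      Nat.cast_choose ℝ him]
    field_simp
    ring_nf
    simp
  have h_reflect : (descPochhammer ℝ m).eval (n : ℝ) =
      (-1) ^ m * (descPochhammer ℝ m).eval (-((n : ℝ) - m + 1)) := by
    rw [← ascPochhammer_eval_neg_eq_descPochhammer, neg_neg, descPochhammer_eval_eq_ascPochhammer]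
  rw [sum_congr rfl h_term, ← mul_sum, ← descPochhammer_eval_add,
    show -((n : ℝ) + α + 1) + (m + α) = -((n : ℝ) - m + 1) by ring,
    Nat.cast_choose_eq_descPochhammer_div, h_reflect, ← mul_div_assoc, ← mul_assoc, ← mul_pow,
    neg_one_mul, neg_neg, one_pow, one_mul, inv_mul_eq_div]

theorem pow_mul_rpow_mul_exp_neg_eq {ξ : ℝ} (hξ : 0 < ξ) (k : ℕ) (α : ℝ) :
    ξ ^ k * (ξ ^ α * exp (-ξ)) = exp (-ξ) * ξ ^ ((k + α + 1) - 1) := by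
  rw [add_sub_cancel_right, rpow_add hξ, rpow_natCast]
  ring

theorem integrableOn_pow_mul_rpow_mul_exp_neg {α : ℝ} (hα : -1 < α) (k : ℕ) :
    IntegrableOn (fun ξ : ℝ => ξ ^ k * (ξ ^ α * exp (-ξ))) (Set.Ioi 0) :=
  (GammaIntegral_convergent (by linarith [Nat.cast_nonneg (α := ℝ) k])).congr_fun
    (fun _ hξ => (pow_mul_rpow_mul_exp_neg_eq hξ k α).symm) measurableSet_Ioi

theorem integral_pow_mul_rpow_mul_exp_neg {α : ℝ} (hα : -1 < α) (k : ℕ) :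
    ∫ ξ in Set.Ioi 0, ξ ^ k * (ξ ^ α * exp (-ξ)) = Gamma (k + α + 1) := by
  rw [Gamma_eq_integral (by linarith [Nat.cast_nonneg (α := ℝ) k])]
  exact setIntegral_congr_fun measurableSet_Ioi fun _ hξ => pow_mul_rpow_mul_exp_neg_eq hξ k α

theorem pow_mul_genLaguerreR_mul_weight (m n : ℕ) (α ξ : ℝ) :
    ξ ^ n * genLaguerreR m α ξ * (ξ ^ α * exp (-ξ)) =
      ∑ i ∈ range (m + 1), laguerreCoeff m α i * (ξ ^ (n + i) * (ξ ^ α * exp (-ξ))) := by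
  rw [genLaguerreR_eq_sum, mul_sum, sum_mul]
  exact sum_congr rfl fun i _ => by ring

theorem integrableOn_pow_mul_genLaguerreR {α : ℝ} (hα : -1 < α) (m n : ℕ) :
    IntegrableOn (fun ξ : ℝ => ξ ^ n * genLaguerreR m α ξ * (ξ ^ α * exp (-ξ))) (Set.Ioi 0) := by
  simp_rw [pow_mul_genLaguerreR_mul_weight]
  exact integrable_finsetSum _ fun i _ =>
    (integrableOn_pow_mul_rpow_mul_exp_neg hα _).const_mul _

theorem integral_pow_mul_genLaguerreR {α : ℝ} (hα : -1 < α) (m n : ℕ) :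
    ∫ ξ in Set.Ioi 0, ξ ^ n * genLaguerreR m α ξ * (ξ ^ α * exp (-ξ)) =
      (-1) ^ m * Gamma (n + α + 1) * n.choose m := by
  have h_gamma : ∀ i : ℕ, Gamma (↑(n + i) + α + 1) =
      Gamma (n + α + 1) * (ascPochhammer ℝ i).eval (n + α + 1) := fun i => by
    rw [← Gamma_add_nat_eq_mul_ascPochhammer (by linarith [Nat.cast_nonneg (α := ℝ) n])]
    push_cast
    ring_nf
  simp_rw [pow_mul_genLaguerreR_mul_weight]
  rw [integral_finsetSum _ fun i _ => (integrableOn_pow_mul_rpow_mul_exp_neg hα _).const_mul _]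
  simp_rw [integral_const_mul, integral_pow_mul_rpow_mul_exp_neg hα, h_gamma,
    mul_left_comm _ (Gamma _), ← mul_sum, sum_laguerreCoeff_mul_ascPochhammer]
  ring

theorem exists_abs_genLaguerreR_le_mul_exp (m : ℕ) (α : ℝ) :
    ∃ C, ∀ ξ, 0 ≤ ξ → |genLaguerreR m α ξ| ≤ C * exp (ξ / 2) := by
  refine ⟨∑ i ∈ range (m + 1), |laguerreCoeff m α i| * (2 ^ i * i !), fun ξ hξ => ?_⟩
  rw [genLaguerreR_eq_sum, sum_mul]
  refine (abs_sum_le_sum_abs _ _).trans (sum_le_sum fun i _ => ?_)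
  have h_pow := pow_div_factorial_le_exp (x := ξ / 2) (by positivity) i
  rw [div_pow, div_div, div_le_iff₀ (by positivity)] at h_pow
  rw [abs_mul, abs_pow, abs_of_nonneg hξ, mul_assoc]
  gcongr
  linarith

theorem exists_integral_norm_pow_mul_genLaguerreR_le {α : ℝ} (hα : -1 < α) (m : ℕ) :
    ∃ C, ∀ n : ℕ, ∫ ξ in Set.Ioi 0, ‖ξ ^ n * genLaguerreR m α ξ * (ξ ^ α * exp (-ξ))‖ ≤
      C * 2 ^ n * Gamma (n + α + 1) := by
  obtain ⟨C, hC⟩ := exists_abs_genLaguerreR_le_mul_exp m α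
  refine ⟨C * 2 ^ (α + 1), fun n => ?_⟩
  have hs : (0 : ℝ) < n + α + 1 := by linarith [Nat.cast_nonneg (α := ℝ) n]
  have h_le : ∀ ξ ∈ Set.Ioi (0 : ℝ), ‖ξ ^ n * genLaguerreR m α ξ * (ξ ^ α * exp (-ξ))‖ ≤
      C * (ξ ^ ((n + α + 1) - 1) * exp (-(1 / 2 * ξ))) := by
    rintro ξ (hξ : 0 < ξ)
    have h_exp : exp (ξ / 2) * exp (-ξ) = exp (-(1 / 2 * ξ)) := by rw [← exp_add]; ring_nf
    rw [norm_mul, norm_mul, norm_of_nonneg (by positivity : 0 ≤ ξ ^ n),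
      norm_of_nonneg (by positivity : 0 ≤ ξ ^ α * exp (-ξ)), norm_eq_abs]
    calc _ ≤ ξ ^ n * (C * exp (ξ / 2)) * (ξ ^ α * exp (-ξ)) := by gcongr; exact hC ξ hξ.le
      _ = C * (exp (ξ / 2) * (ξ ^ n * (ξ ^ α * exp (-ξ)))) := by ring
      _ = _ := by rw [pow_mul_rpow_mul_exp_neg_eq hξ, ← h_exp]; ring
  have h_int : IntegrableOn (fun ξ : ℝ => C * (ξ ^ ((n + α + 1) - 1) * exp (-(1 / 2 * ξ))))
      (Set.Ioi 0) := by
    refine IntegrableOn.congr_fun ((integrableOn_rpow_mul_exp_neg_mul_rpow (s := n + α) (p := 1)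
      (b := 1 / 2) (by linarith [Nat.cast_nonneg (α := ℝ) n]) one_pos one_half_pos).const_mul C)
      (fun ξ _ => ?_) measurableSet_Ioi
    simp only [rpow_one, add_sub_cancel_right, neg_mul]
  calc _ ≤ ∫ ξ in Set.Ioi 0, C * (ξ ^ ((n + α + 1) - 1) * exp (-(1 / 2 * ξ))) :=
        setIntegral_mono_on (integrableOn_pow_mul_genLaguerreR hα m n).norm h_int
          measurableSet_Ioi h_le
    _ = C * 2 ^ (α + 1) * 2 ^ n * Gamma (n + α + 1) := by
        rw [integral_const_mul, integral_rpow_mul_exp_neg_mul_Ioi hs (by norm_num), one_div_one_div,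
          add_assoc, rpow_add two_pos, rpow_natCast]
        ring

theorem hasSum_choose_mul_pow_div_factorial (x : ℝ) (m : ℕ) :
    HasSum (fun n : ℕ => n.choose m * x ^ n / n !) (x ^ m / m ! * exp x) := by
  have h_init : ∑ i ∈ range m, ((i.choose m : ℝ) * x ^ i / i !) = 0 :=
    sum_eq_zero fun i hi => by simp [Nat.choose_eq_zero_of_lt (mem_range.mp hi)]
  have h_shift : ∀ n : ℕ, ((n + m).choose m : ℝ) * x ^ (n + m) / (n + m)! =
      x ^ m / m ! * (x ^ n / n !) := fun n => by
    have h_choose : ((n + m).choose m : ℝ) ≠ 0 := by exact_mod_cast (Nat.choose_pos (by omega)).ne'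
    rw [← Nat.add_choose_mul_factorial_mul_factorial n m]
    push_cast
    field_simp
    ring
  rw [← hasSum_nat_add_iff' m, h_init, sub_zero]
  simp_rw [h_shift]
  rw [exp_eq_exp_ℝ]
  exact (NormedSpace.expSeries_div_hasSum_exp x).mul_left _

theorem integral_tsum_mul_genLaguerreR {α : ℝ} (hα : -1 < α) (m : ℕ) (a : ℕ → ℝ)
    (ha : Summable fun n => |a n| * 2 ^ n * Gamma (n + α + 1)) :
    ∫ ξ in Set.Ioi 0, (∑' n, a n * ξ ^ n) * genLaguerreR m α ξ * (ξ ^ α * exp (-ξ)) =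
      ∑' n, a n * ((-1) ^ m * Gamma (n + α + 1) * n.choose m) := by
  obtain ⟨C, hC⟩ := exists_integral_norm_pow_mul_genLaguerreR_le hα m
  have h_summable : Summable fun n => ∫ ξ in Set.Ioi 0,
      ‖a n * (ξ ^ n * genLaguerreR m α ξ * (ξ ^ α * exp (-ξ)))‖ := by
    refine (ha.mul_left C).of_nonneg_of_le (fun n => integral_nonneg fun _ => norm_nonneg _)
      fun n => ?_
    simp_rw [norm_mul (a n), integral_const_mul, norm_eq_abs (a n)]
    calc _ ≤ |a n| * (C * 2 ^ n * Gamma (n + α + 1)) := by gcongr; exact hC n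
      _ = _ := by ring
  simp_rw [mul_assoc (∑' n, a n * _), ← tsum_mul_right, mul_assoc (a _), ← mul_assoc (_ ^ _)]
  rw [← integral_tsum_of_summable_integral_norm
    (fun n => (integrableOn_pow_mul_genLaguerreR hα m n).const_mul _) h_summable]
  simp_rw [integral_const_mul, integral_pow_mul_genLaguerreR hα]

theorem integral_sphericalAverage_mul_normGenLaguerre (m : ℕ) {A : ℝ} (hA : 0 < A) (c : ℝ) :
    ∫ ξ in Set.Ioi (0 : ℝ),
        (∑' n : ℕ, (-c ^ 2) ^ n * Gamma A * ξ ^ n / (Gamma ((n : ℝ) + 1) * Gamma (A + (n : ℝ)))) *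
          normGenLaguerre m (A - 1) ξ * (ξ ^ (A - 1) * exp (-ξ) / Gamma A) =
      √(m ! / Gamma (m + A)) * ((c ^ 2) ^ m / m ! * exp (-c ^ 2)) := by
  set a : ℕ → ℝ := fun n => (-c ^ 2) ^ n * Gamma A / (Gamma (n + 1) * Gamma (A + n))
  have h_gamma : ∀ n : ℕ, a n * Gamma (n + (A - 1) + 1) = Gamma A * ((-c ^ 2) ^ n / n !) :=
    fun n => by
      have : Gamma (A + n) ≠ 0 := (Gamma_pos_of_pos (by positivity)).ne'
      simp only [a, show (n : ℝ) + (A - 1) + 1 = A + n by ring, Gamma_nat_eq_factorial]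
      field_simp
  have h_integrand : ∀ ξ : ℝ,
      (∑' n : ℕ, (-c ^ 2) ^ n * Gamma A * ξ ^ n / (Gamma ((n : ℝ) + 1) * Gamma (A + (n : ℝ)))) *
          normGenLaguerre m (A - 1) ξ * (ξ ^ (A - 1) * exp (-ξ) / Gamma A) =
        √(m ! / Gamma (m + A)) / Gamma A *
          ((∑' n, a n * ξ ^ n) * genLaguerreR m (A - 1) ξ * (ξ ^ (A - 1) * exp (-ξ))) := by
    intro ξ
    simp only [a, normGenLaguerre, show (m : ℝ) + (A - 1) + 1 = m + A by ring, div_mul_eq_mul_div]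
    ring
  have h_summable : Summable fun n : ℕ => |a n| * 2 ^ n * Gamma (n + (A - 1) + 1) := by
    refine ((summable_pow_div_factorial (2 * c ^ 2)).mul_left (Gamma A)).congr fun n => ?_
    have hΓ : 0 < Gamma (n + (A - 1) + 1) :=
      Gamma_pos_of_pos (by linarith [Nat.cast_nonneg (α := ℝ) n])
    calc Gamma A * ((2 * c ^ 2) ^ n / n !) = 2 ^ n * |Gamma A * ((-c ^ 2) ^ n / n !)| := by
          rw [abs_mul, abs_div, abs_pow, abs_neg, abs_of_pos (Gamma_pos_of_pos hA),
            abs_of_nonneg (sq_nonneg c), Nat.abs_cast, mul_pow]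
          ring
      _ = |a n| * 2 ^ n * Gamma (n + (A - 1) + 1) := by
          rw [← h_gamma, abs_mul, abs_of_pos hΓ]
          ring
  simp_rw [h_integrand, integral_const_mul]
  rw [integral_tsum_mul_genLaguerreR (by linarith) m a h_summable]
  have h_term : ∀ n : ℕ, a n * ((-1) ^ m * Gamma (n + (A - 1) + 1) * n.choose m) =
      (-1) ^ m * Gamma A * (n.choose m * (-c ^ 2) ^ n / n !) := fun n => by
    linear_combination (-1) ^ m * (n.choose m : ℝ) * h_gamma n
  rw [tsum_congr h_term, tsum_mul_left, (hasSum_choose_mul_pow_div_factorial _ m).tsum_eq]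
  field_simp [(Gamma_pos_of_pos hA).ne']
  rw [← mul_pow]
  ring

theorem abs_laguerre_coeff_spherical_average_general (d : ℕ) (hd : 2 ≤ d) (m : ℕ) (c : ℝ) :
    |∫ ξ in Set.Ioi (0 : ℝ),
        (∑' n : ℕ, (-c ^ 2) ^ n * Real.Gamma ((d : ℝ) / 2) * ξ ^ n /
            (Real.Gamma ((n : ℝ) + 1) * Real.Gamma ((d : ℝ) / 2 + (n : ℝ)))) *
          normGenLaguerre m ((d : ℝ) / 2 - 1) ξ *
          (ξ ^ ((d : ℝ) / 2 - 1) * Real.exp (-ξ) / Real.Gamma ((d : ℝ) / 2))| =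
      Real.sqrt (1 / ((Nat.factorial m) * Real.Gamma ((m : ℝ) + (d : ℝ) / 2))) *
        c ^ (2 * m) * Real.exp (-c ^ 2) := by
  have hA : (0 : ℝ) < d / 2 := div_pos (Nat.cast_pos.mpr (by omega)) two_pos
  have h_fact : (0 : ℝ) < m ! := by positivity
  rw [integral_sphericalAverage_mul_normGenLaguerre m hA c, abs_of_nonneg (by positivity),
    sqrt_div' _ (Gamma_pos_of_pos (by positivity)).le, one_div, sqrt_inv, ← pow_mul,
    sqrt_mul h_fact.le]
  field_simp
  rw [sq_sqrt h_fact.le, mul_comm]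

/-- The Laguerre coefficients `γ_m = ⟨f̄, ℓ_m^α⟩_{p_Ξ}` of the spherical average
`f̄(ξ) = ∑_n (-c²)^n Γ(d/2) ξ^n/(Γ(n+1)Γ(d/2+n))`, with `α = d/2-1` and
`p_Ξ(ξ) = ξ^{d/2-1}e^{-ξ}/Γ(d/2)`, satisfy `|γ_m| = √(1/(m!Γ(m+d/2))) c^{2m} e^{-c²}`
(in particular `|γ_m|` is bounded by that quantity), where `c = ‖x-y‖/(√2 σ)`. -/
theorem abs_laguerre_coeff_spherical_average (d : ℕ) (hd : 2 ≤ d)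
    (x y : EuclideanSpace ℝ (Fin d)) (σ : ℝ) (hσ : 0 < σ) (m : ℕ)
    (c : ℝ) (hc : c = ‖x - y‖ / (Real.sqrt 2 * σ)) :
    |∫ ξ in Set.Ioi (0 : ℝ),
        (∑' n : ℕ, (-c ^ 2) ^ n * Real.Gamma ((d : ℝ) / 2) * ξ ^ n /
            (Real.Gamma ((n : ℝ) + 1) * Real.Gamma ((d : ℝ) / 2 + (n : ℝ)))) *
          normGenLaguerre m ((d : ℝ) / 2 - 1) ξ *
          (ξ ^ ((d : ℝ) / 2 - 1) * Real.exp (-ξ) / Real.Gamma ((d : ℝ) / 2))| =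
      Real.sqrt (1 / ((Nat.factorial m) * Real.Gamma ((m : ℝ) + (d : ℝ) / 2))) *
        c ^ (2 * m) * Real.exp (-c ^ 2) :=
  abs_laguerre_coeff_spherical_average_general d hd m c
end

section
/- Let d ≥ 2, k even, β ≥ 0, and let P_k be the Gegenbauer polynomial of degree k normalized with P_k(1)=1. Define λ_k := (Γ(d/2)/(√π Γ((d-1)/2))) ∫_{-1}^1 cos(βt) P_k(t) (1-t²)^{(d-3)/2} dt. Then |λ_k| ≤ (β/2)^k · Γ((d-1)/2)/Γ(k+(d-1)/2). -/
open Real intervalIntegral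

/-- The Gegenbauer polynomial of degree `k` for dimension `d`, via the Rodrigues formula. -/
noncomputable def gegenbauerRodrigues (d k : ℕ) (t : ℝ) : ℝ :=
  (-(1 : ℝ) / 2) ^ k *
    (Real.Gamma (((d : ℝ) - 1) / 2) / Real.Gamma ((k : ℝ) + ((d : ℝ) - 1) / 2)) *
    (1 - t ^ 2) ^ ((3 - (d : ℝ)) / 2) *
    iteratedDeriv k (fun s : ℝ => (1 - s ^ 2) ^ ((k : ℝ) + ((d : ℝ) - 3) / 2)) t

/-!
Integrating by parts `k` times moves the derivatives of the Rodrigues formula onto `cos (β t)`.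
The boundary terms vanish: for `i < k`, `(d/dt)^i (1 - t²)^(k + (d-3)/2)` is a polynomial
times `(1 - t²)^(k - i + (d-3)/2)`, a positive power. What remains is bounded using
`|(d/dt)^k cos (β t)| ≤ β^k` and `(1 - t²)^(k + (d-3)/2) ≤ (1 - t²)^((d-3)/2)`, whose integral
`√π Γ((d-1)/2) / Γ(d/2)` is a Beta integral and cancels the normalising constant.
-/

open MeasureTheory Set Polynomial

lemma integral_rpow_mul_one_sub_rpow {a b : ℝ} (ha : 0 < a) (hb : 0 < b) :
    ∫ x in (0:ℝ)..1, x ^ (a - 1) * (1 - x) ^ (b - 1) =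
      Real.Gamma a * Real.Gamma b / Real.Gamma (a + b) := by
  have hbeta := Complex.betaIntegral_eq_Gamma_mul_div a b (by simpa using ha) (by simpa using hb)
  have hreal :
      Complex.betaIntegral a b = ↑(∫ x in (0:ℝ)..1, x ^ (a - 1) * (1 - x) ^ (b - 1)) := by
    rw [Complex.betaIntegral, ← intervalIntegral.integral_ofReal]
    refine intervalIntegral.integral_congr fun x hx => ?_
    rw [uIcc_of_le zero_le_one] at hx
    push_cast [Complex.ofReal_cpow hx.1, Complex.ofReal_cpow (sub_nonneg.2 hx.2)]
    rfl
  rw [hreal, ← Complex.ofReal_add, Complex.Gamma_ofReal, Complex.Gamma_ofReal,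
    Complex.Gamma_ofReal] at hbeta
  exact_mod_cast hbeta

lemma integral_one_sub_sq_rpow {p : ℝ} (hp : -1 < p) :
    ∫ t in (-1:ℝ)..1, (1 - t ^ 2) ^ p =
      √π * Real.Gamma (p + 1) / Real.Gamma (p + 3 / 2) := by
  have hsubst : ∫ t in (-1:ℝ)..1, (1 - t ^ 2) ^ p
      = 2 * (4 : ℝ) ^ p * ∫ x in (0:ℝ)..1, x ^ (p + 1 - 1) * (1 - x) ^ (p + 1 - 1) := by
    have h := intervalIntegral.integral_comp_mul_sub (a := (0:ℝ)) (b := 1)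
      (fun t => (1 - t ^ 2) ^ p) two_ne_zero 1
    norm_num at h
    calc ∫ t in (-1:ℝ)..1, (1 - t ^ 2) ^ p
          = 2 * ∫ x in (0:ℝ)..1, (1 - (2 * x - 1) ^ 2) ^ p := by
          rw [h]; ring
      _ = 2 * ∫ x in (0:ℝ)..1, (4 : ℝ) ^ p * (x ^ (p + 1 - 1) * (1 - x) ^ (p + 1 - 1)) := by
          congr 1
          refine intervalIntegral.integral_congr fun x hx => ?_
          rw [uIcc_of_le zero_le_one] at hx
          rw [show 1 - (2 * x - 1) ^ 2 = 4 * (x * (1 - x)) by ring,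
            Real.mul_rpow (by norm_num) (mul_nonneg hx.1 (by linarith [hx.2])),
            Real.mul_rpow hx.1 (by linarith [hx.2])]
          ring_nf
      _ = _ := by rw [intervalIntegral.integral_const_mul]; ring
  have hdup := Real.Gamma_mul_Gamma_add_half_of_pos (s := p + 1) (by linarith)
  have hpow : 2 * (4 : ℝ) ^ p * 2 ^ (1 - 2 * (p + 1)) = 1 := by
    rw [show 1 - 2 * (p + 1) = -(2 * p) - 1 by ring, Real.rpow_sub two_pos,
      Real.rpow_neg zero_le_two, Real.rpow_mul zero_le_two]
    norm_num
    field_simp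
  rw [hsubst, integral_rpow_mul_one_sub_rpow (by linarith) (by linarith)]
  rw [show p + 1 + 1 / 2 = p + 3 / 2 by ring] at hdup
  have h1 := Real.Gamma_pos_of_pos (show 0 < p + 3 / 2 by linarith)
  have h2 := Real.Gamma_pos_of_pos (show 0 < 2 * (p + 1) by linarith)
  rw [show p + 1 + (p + 1) = 2 * (p + 1) by ring, eq_div_iff h1.ne',
    mul_div_assoc', div_mul_eq_mul_div, div_eq_iff h2.ne']
  linear_combination (2 * (4 : ℝ) ^ p * Real.Gamma (p + 1)) * hdup
    + Real.Gamma (p + 1) * Real.Gamma (2 * (p + 1)) * √π * hpow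

lemma intervalIntegrable_one_sub_sq_rpow {c : ℝ} (hc : -1 < c) :
    IntervalIntegrable (fun t : ℝ => (1 - t ^ 2) ^ c) volume (-1) 1 := by
  have hright : IntervalIntegrable (fun t : ℝ => (1 - t ^ 2) ^ c) volume 0 1 := by
    have hsing : IntervalIntegrable (fun t : ℝ => (1 - t) ^ c) volume 0 1 := by
      simpa using (intervalIntegrable_rpow' (a := 1) (b := 0) hc).comp_sub_left 1
    have hreg : ContinuousOn (fun t : ℝ => (1 + t) ^ c) (uIcc 0 1) :=
      ContinuousOn.rpow_const (f := fun t => 1 + t) (by fun_prop) fun t ht => Or.inl <| by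
        rw [uIcc_of_le zero_le_one] at ht
        linarith [ht.1]
    refine (hsing.mul_continuousOn hreg).congr_uIoo fun t ht => ?_
    rw [uIoo_of_le zero_le_one] at ht
    rw [show 1 - t ^ 2 = (1 - t) * (1 + t) by ring,
      Real.mul_rpow (by linarith [ht.2]) (by linarith [ht.1])]
  have hleft : IntervalIntegrable (fun t : ℝ => (1 - t ^ 2) ^ c) volume (-1) 0 := by
    simpa using ((IntervalIntegrable.iff_comp_neg).mp hright).symm
  exact hleft.trans hright

noncomputable def rodriguesPoly (c : ℝ) : ℕ → ℝ[X]
  | 0 => 1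
  | i + 1 => derivative (rodriguesPoly c i) * (1 - X ^ 2) - C (2 * (c - i)) * X * rodriguesPoly c i

lemma hasDerivAt_rodriguesPoly_mul_rpow (c : ℝ) (i : ℕ) {t : ℝ}
    (ht : t ∈ Ioo (-1 : ℝ) 1) :
    HasDerivAt (fun s => (rodriguesPoly c i).eval s * (1 - s ^ 2) ^ (c - i))
      ((rodriguesPoly c (i + 1)).eval t * (1 - t ^ 2) ^ (c - (i + 1 : ℕ))) t := by
  have hpos : 0 < 1 - t ^ 2 := by nlinarith [ht.1, ht.2]
  have hw := ((hasDerivAt_pow 2 t).const_sub 1).rpow_const (p := c - i) (Or.inl hpos.ne')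
  refine ((rodriguesPoly c i).hasDerivAt t |>.mul hw).congr_deriv ?_
  rw [show c - i - 1 = c - (i + 1 : ℕ) by push_cast; ring,
    show c - i = c - (i + 1 : ℕ) + 1 by push_cast; ring, Real.rpow_add_one hpos.ne']
  simp only [rodriguesPoly, eval_sub, eval_mul, eval_one, eval_pow, eval_X, eval_C]
  push_cast
  ring

lemma iteratedDeriv_one_sub_sq_rpow (c : ℝ) (i : ℕ) {t : ℝ} (ht : t ∈ Ioo (-1 : ℝ) 1) :
    iteratedDeriv i (fun s => (1 - s ^ 2) ^ c) t
      = (rodriguesPoly c i).eval t * (1 - t ^ 2) ^ (c - i) := by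
  induction i generalizing t with
  | zero => simp [rodriguesPoly]
  | succ i ih =>
    have hev : iteratedDeriv i (fun s => (1 - s ^ 2) ^ c)
        =ᶠ[nhds t] fun s => (rodriguesPoly c i).eval s * (1 - s ^ 2) ^ (c - i) :=
      Filter.eventually_of_mem (isOpen_Ioo.mem_nhds ht) fun s hs => ih hs
    rw [iteratedDeriv_succ, hev.deriv_eq]
    exact (hasDerivAt_rodriguesPoly_mul_rpow c i ht).deriv

lemma integral_mul_rodriguesPoly_succ {g : ℝ → ℝ} (hg : ContDiff ℝ 1 g) {c : ℝ} {i : ℕ}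
    (hci : (i : ℝ) < c) :
    ∫ t in (-1:ℝ)..1,
        g t * ((rodriguesPoly c (i + 1)).eval t * (1 - t ^ 2) ^ (c - (i + 1 : ℕ)))
      = -∫ t in (-1:ℝ)..1,
        deriv g t * ((rodriguesPoly c i).eval t * (1 - t ^ 2) ^ (c - i)) := by
  have hv : Continuous fun t => (rodriguesPoly c i).eval t * (1 - t ^ 2) ^ (c - i) :=
    (rodriguesPoly c i).continuous.mul <|
      (continuous_const.sub (continuous_pow 2)).rpow_const fun _ => Or.inr (by linarith)
  have hv' : IntervalIntegrable
      (fun t => (rodriguesPoly c (i + 1)).eval t * (1 - t ^ 2) ^ (c - (i + 1 : ℕ)))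
      volume (-1) 1 :=
    (intervalIntegrable_one_sub_sq_rpow (by push_cast; linarith)).continuousOn_mul
      (rodriguesPoly c (i + 1)).continuous.continuousOn
  rw [intervalIntegral.integral_mul_deriv_eq_deriv_mul_of_hasDerivAt hg.continuous.continuousOn
    hv.continuousOn (fun t _ => (hg.differentiable one_ne_zero t).hasDerivAt)
    (fun t ht => hasDerivAt_rodriguesPoly_mul_rpow c i (by simpa using ht))
    ((hg.continuous_deriv le_rfl).intervalIntegrable _ _) hv']
  have hzero : (0 : ℝ) ^ (c - i) = 0 := Real.zero_rpow (by linarith)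
  norm_num [hzero]

lemma integral_mul_rodriguesPoly {g : ℝ → ℝ} {c : ℝ} (n : ℕ) (hg : ContDiff ℝ n g)
    (hc : (n : ℝ) - 1 < c) :
    ∫ t in (-1:ℝ)..1, g t * ((rodriguesPoly c n).eval t * (1 - t ^ 2) ^ (c - n))
      = (-1) ^ n * ∫ t in (-1:ℝ)..1, iteratedDeriv n g t * (1 - t ^ 2) ^ c := by
  induction n generalizing g with
  | zero => simp [rodriguesPoly]
  | succ n ih =>
    push_cast at hg hc
    rw [integral_mul_rodriguesPoly_succ (hg.of_le le_add_self) (by linarith),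
      ih (contDiff_succ_iff_deriv.mp hg).2.2 (by linarith), iteratedDeriv_succ']
    ring

lemma integral_mul_iteratedDeriv_one_sub_sq_rpow {g : ℝ → ℝ} {c : ℝ} (n : ℕ)
    (hg : ContDiff ℝ n g) (hc : (n : ℝ) - 1 < c) :
    ∫ t in (-1:ℝ)..1, g t * iteratedDeriv n (fun s => (1 - s ^ 2) ^ c) t
      = (-1) ^ n * ∫ t in (-1:ℝ)..1, iteratedDeriv n g t * (1 - t ^ 2) ^ c := by
  rw [← integral_mul_rodriguesPoly n hg hc]
  refine intervalIntegral.integral_congr_uIoo fun t ht => ?_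
  rw [uIoo_of_le (by norm_num)] at ht
  simp only [iteratedDeriv_one_sub_sq_rpow c n ht]

lemma abs_integral_mul_one_sub_sq_rpow_le {f : ℝ → ℝ} {M a c : ℝ}
    (hf : ∀ t ∈ Ioo (-1 : ℝ) 1, |f t| ≤ M) (ha : -1 < a) (hac : a ≤ c) :
    |∫ t in (-1:ℝ)..1, f t * (1 - t ^ 2) ^ c| ≤
      M * ∫ t in (-1:ℝ)..1, (1 - t ^ 2) ^ a := by
  have hM : 0 ≤ M := (abs_nonneg _).trans (hf 0 (by norm_num))
  calc |∫ t in (-1:ℝ)..1, f t * (1 - t ^ 2) ^ c|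
      ≤ ∫ t in (-1:ℝ)..1, M * (1 - t ^ 2) ^ a := by
        rw [← Real.norm_eq_abs]
        refine intervalIntegral.norm_integral_le_of_norm_le (by norm_num) ?_
          ((intervalIntegrable_one_sub_sq_rpow ha).const_mul M)
        -- `t = 1` is excluded: there `0 ^ c ≤ 0 ^ a` fails when `c = 0 > a` (`0 ^ 0 = 1`).
        filter_upwards [Measure.ae_ne volume 1] with t hne ht
        have ht' : t ∈ Ioo (-1 : ℝ) 1 := ⟨ht.1, lt_of_le_of_ne ht.2 hne⟩
        have hpos : 0 < 1 - t ^ 2 := by nlinarith [ht'.1, ht'.2]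
        rw [Real.norm_eq_abs, abs_mul, abs_of_pos (Real.rpow_pos_of_pos hpos c)]
        exact mul_le_mul (hf t ht') (Real.rpow_le_rpow_of_exponent_ge hpos (by nlinarith) hac)
          (Real.rpow_pos_of_pos hpos c).le hM
    _ = M * ∫ t in (-1:ℝ)..1, (1 - t ^ 2) ^ a := intervalIntegral.integral_const_mul M _

lemma abs_iteratedDeriv_cos_mul_le (n : ℕ) (β t : ℝ) :
    |iteratedDeriv n (fun s => Real.cos (β * s)) t| ≤ |β| ^ n := by
  rw [iteratedDeriv_comp_const_mul Real.contDiff_cos, abs_mul, abs_pow]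
  exact mul_le_of_le_one_right (by positivity) (abs_iteratedDeriv_cos_le_one n _)

lemma gegenbauerRodrigues_mul_one_sub_sq_rpow (d k : ℕ) {t : ℝ} (ht : t ∈ Ioo (-1 : ℝ) 1) :
    gegenbauerRodrigues d k t * (1 - t ^ 2) ^ (((d : ℝ) - 3) / 2) =
      (-(1 : ℝ) / 2) ^ k *
        (Real.Gamma (((d : ℝ) - 1) / 2) / Real.Gamma ((k : ℝ) + ((d : ℝ) - 1) / 2)) *
        iteratedDeriv k (fun s : ℝ => (1 - s ^ 2) ^ ((k : ℝ) + ((d : ℝ) - 3) / 2)) t := by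
  have hpos : 0 < 1 - t ^ 2 := by nlinarith [ht.1, ht.2]
  rw [gegenbauerRodrigues, mul_right_comm _ (iteratedDeriv _ _ _),
    mul_assoc (_ * _) ((1 - t ^ 2) ^ ((3 - (d : ℝ)) / 2)), ← Real.rpow_add hpos,
    show (3 - (d : ℝ)) / 2 + ((d : ℝ) - 3) / 2 = 0 by ring, Real.rpow_zero, mul_one]

lemma integral_mul_gegenbauerRodrigues {d : ℕ} (hd : 2 ≤ d) (k : ℕ) {g : ℝ → ℝ}
    (hg : ContDiff ℝ k g) :
    ∫ t in (-1:ℝ)..1, g t * gegenbauerRodrigues d k t * (1 - t ^ 2) ^ (((d : ℝ) - 3) / 2) =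
      (1 / 2) ^ k *
        (Real.Gamma (((d : ℝ) - 1) / 2) / Real.Gamma ((k : ℝ) + ((d : ℝ) - 1) / 2)) *
        ∫ t in (-1:ℝ)..1,
          iteratedDeriv k g t * (1 - t ^ 2) ^ ((k : ℝ) + ((d : ℝ) - 3) / 2) := by
  have hd' : (2 : ℝ) ≤ d := by exact_mod_cast hd
  calc _ = (-(1 : ℝ) / 2) ^ k *
        (Real.Gamma (((d : ℝ) - 1) / 2) / Real.Gamma ((k : ℝ) + ((d : ℝ) - 1) / 2)) *
        ∫ t in (-1:ℝ)..1, g t *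
          iteratedDeriv k (fun s : ℝ => (1 - s ^ 2) ^ ((k : ℝ) + ((d : ℝ) - 3) / 2)) t := by
        rw [← intervalIntegral.integral_const_mul]
        refine intervalIntegral.integral_congr_uIoo fun t ht => ?_
        rw [uIoo_of_le (by norm_num)] at ht
        simp only [mul_assoc, gegenbauerRodrigues_mul_one_sub_sq_rpow d k ht]
        ring
    _ = _ := by
        have hsign : (-(1 : ℝ) / 2) ^ k * (-1) ^ k = (1 / 2) ^ k := by
          rw [← mul_pow]
          norm_num
        rw [integral_mul_iteratedDeriv_one_sub_sq_rpow k hg (by linarith), ← hsign]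
        ring

theorem abs_gegenbauer_coeff_cos_le_general (d k : ℕ) (hd : 2 ≤ d) (β : ℝ) (hβ : 0 ≤ β) :
    |Real.Gamma ((d : ℝ) / 2) / (Real.sqrt π * Real.Gamma (((d : ℝ) - 1) / 2)) *
        ∫ t in (-1:ℝ)..1,
          Real.cos (β * t) * gegenbauerRodrigues d k t * (1 - t ^ 2) ^ (((d : ℝ) - 3) / 2)| ≤
      (β / 2) ^ k * (Real.Gamma (((d : ℝ) - 1) / 2) / Real.Gamma ((k : ℝ) + ((d : ℝ) - 1) / 2)) := by
  have hd' : (2 : ℝ) ≤ d := by exact_mod_cast hd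
  have hG₁ : 0 < Real.Gamma (((d : ℝ) - 1) / 2) := Real.Gamma_pos_of_pos (by linarith)
  have hG₂ : 0 < Real.Gamma ((d : ℝ) / 2) := Real.Gamma_pos_of_pos (by linarith)
  have hGk : 0 < Real.Gamma ((k : ℝ) + ((d : ℝ) - 1) / 2) :=
    Real.Gamma_pos_of_pos (by linarith [(k.cast_nonneg : (0 : ℝ) ≤ k)])
  have hbound := abs_integral_mul_one_sub_sq_rpow_le
    (fun t _ => abs_iteratedDeriv_cos_mul_le k β t) (a := ((d : ℝ) - 3) / 2) (by linarith)
    (le_add_of_nonneg_left k.cast_nonneg)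
  rw [integral_one_sub_sq_rpow (by linarith), abs_of_nonneg hβ,
    show ((d : ℝ) - 3) / 2 + 1 = ((d : ℝ) - 1) / 2 by ring,
    show ((d : ℝ) - 3) / 2 + 3 / 2 = (d : ℝ) / 2 by ring] at hbound
  rw [integral_mul_gegenbauerRodrigues hd k (by fun_prop), abs_mul, abs_mul, abs_mul,
    abs_of_pos (by positivity), abs_of_pos (by positivity), abs_of_pos (by positivity)]
  refine (mul_le_mul_of_nonneg_left (mul_le_mul_of_nonneg_left hbound (by positivity))
    (by positivity)).trans_eq ?_
  rw [div_pow β, one_div_pow]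
  field_simp

/-- Bound on the Gegenbauer coefficients of `t ↦ cos(βt)`: for `d ≥ 2`, even `k`, `β ≥ 0`,
`|λ_k| ≤ (β/2)^k Γ((d-1)/2)/Γ(k+(d-1)/2)`. -/
theorem abs_gegenbauer_coeff_cos_le (d k : ℕ) (hd : 2 ≤ d) (hk : Even k) (β : ℝ) (hβ : 0 ≤ β) :
    |Real.Gamma ((d : ℝ) / 2) / (Real.sqrt π * Real.Gamma (((d : ℝ) - 1) / 2)) *
        ∫ t in (-1:ℝ)..1,
          Real.cos (β * t) * gegenbauerRodrigues d k t * (1 - t ^ 2) ^ (((d : ℝ) - 3) / 2)| ≤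
      (β / 2) ^ k * (Real.Gamma (((d : ℝ) - 1) / 2) / Real.Gamma ((k : ℝ) + ((d : ℝ) - 1) / 2)) :=
  abs_gegenbauer_coeff_cos_le_general d k hd β hβ
end
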